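/- arXiv:2503.15906 — 3 statements merged into one kernel-verified Lean document; each statement's English description precedes it below -/
import Mathlib

section
/- Let 0 < α < 1/2, let g: [0,1] → ℝ be continuous, and for 0 ≤ u < s ≤ 1 define D₁(s,u) = (c_H/Γ(α)) s^{-α} ∫_u^s r^α g(r) (s-r)^{α-1} (r-u)^{-α} dr. Then lim_{u→s⁻} D₁(s,u) = c_H Γ(1-α) g(s) for each fixed s ∈ (0,1]. -/
/-!
Substituting `r = u + (s - u) x` turns the integral into
`∫₀¹ h(u + (s - u) x) (1 - x)^(α-1) x^(-α) dx` with `h r = r^α g r`: the factors of `s - u`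
cancel exactly because the two exponents add up to `-1`. The Beta kernel is integrable and `h`
is bounded on `[0, s]`, so dominated convergence gives the limit `h(s) B(1 - α, α)`, and
`B(1 - α, α) = Γ(1 - α) Γ(α)`.
-/

open MeasureTheory Real intervalIntegral Filter Set Topology

lemma ofReal_rpow_mul_one_sub_rpow {x : ℝ} (hx : x ∈ Icc (0 : ℝ) 1) (a b : ℝ) :
    ((x ^ (a - 1) * (1 - x) ^ (b - 1) : ℝ) : ℂ) =
      (x : ℂ) ^ ((a : ℂ) - 1) * (1 - (x : ℂ)) ^ ((b : ℂ) - 1) := by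
  rw [Complex.ofReal_mul, Complex.ofReal_cpow hx.1, Complex.ofReal_cpow (sub_nonneg.2 hx.2)]
  push_cast
  rfl

lemma intervalIntegrable_rpow_mul_one_sub_rpow {a b : ℝ} (ha : 0 < a) (hb : 0 < b) :
    IntervalIntegrable (fun x : ℝ => x ^ (a - 1) * (1 - x) ^ (b - 1)) volume 0 1 := by
  have hC := Complex.betaIntegral_convergent (u := a) (v := b) (by simpa) (by simpa)
  rw [intervalIntegrable_iff_integrableOn_Ioc_of_le zero_le_one] at hC ⊢
  refine IntegrableOn.congr_fun hC.re (fun x hx => ?_) measurableSet_Ioc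
  rw [← ofReal_rpow_mul_one_sub_rpow (Ioc_subset_Icc_self hx)]
  rfl

lemma integral_rpow_mul_one_sub_rpow {a b : ℝ} (ha : 0 < a) (hb : 0 < b) :
    ∫ x in (0 : ℝ)..1, x ^ (a - 1) * (1 - x) ^ (b - 1) =
      Gamma a * Gamma b / Gamma (a + b) := by
  have h : Complex.betaIntegral a b = ↑(∫ x in (0 : ℝ)..1, x ^ (a - 1) * (1 - x) ^ (b - 1)) := by
    rw [Complex.betaIntegral, ← intervalIntegral.integral_ofReal]
    refine integral_congr fun x hx => ?_
    rw [uIcc_of_le zero_le_one] at hx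
    exact (ofReal_rpow_mul_one_sub_rpow hx a b).symm
  rw [← ProbabilityTheory.beta, ProbabilityTheory.beta_eq_betaIntegralReal a b ha hb, h,
    Complex.ofReal_re]

lemma integral_mul_rpow_sub_mul_rpow_sub (h : ℝ → ℝ) (α : ℝ) {u s : ℝ} (hus : u < s) :
    ∫ r in u..s, h r * (s - r) ^ (α - 1) * (r - u) ^ (-α) =
      ∫ x in (0 : ℝ)..1, h ((s - u) * x + u) * ((1 - x) ^ (α - 1) * x ^ (-α)) := by
  have hc : 0 < s - u := sub_pos.2 hus
  have hscale : (s - u) * ((s - u) ^ (α - 1) * (s - u) ^ (-α)) = 1 := by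
    rw [← rpow_add hc, show α - 1 + -α = -1 by ring, rpow_neg_one, mul_inv_cancel₀ hc.ne']
  have hcov := smul_integral_comp_mul_add
    (fun r => h r * (s - r) ^ (α - 1) * (r - u) ^ (-α)) (s - u) u (a := 0) (b := 1)
  simp only [mul_zero, zero_add, mul_one, sub_add_cancel, smul_eq_mul] at hcov
  rw [← hcov, ← intervalIntegral.integral_const_mul]
  refine integral_congr fun x hx => ?_
  rw [uIcc_of_le zero_le_one] at hx
  rw [show s - ((s - u) * x + u) = (s - u) * (1 - x) by ring, add_sub_cancel_right,
    mul_rpow hc.le (sub_nonneg.2 hx.2), mul_rpow hc.le hx.1]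
  linear_combination (h ((s - u) * x + u) * ((1 - x) ^ (α - 1) * x ^ (-α))) * hscale

lemma tendsto_integral_comp_affine_mul {h : ℝ → ℝ} {a s : ℝ} (has : a < s)
    (hh : ContinuousOn h (Icc a s)) {k : ℝ → ℝ} (hk : IntervalIntegrable k volume 0 1) :
    Tendsto (fun u => ∫ x in (0 : ℝ)..1, h ((s - u) * x + u) * k x) (𝓝[<] s)
      (𝓝 (h s * ∫ x in (0 : ℝ)..1, k x)) := by
  obtain ⟨M, hM⟩ := isCompact_Icc.exists_bound_of_continuousOn hh
  have hnear : Ioo a s ∈ 𝓝[<] s := Ioo_mem_nhdsLT has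
  have hmaps : ∀ u ∈ Ioo a s, ∀ x ∈ Icc (0 : ℝ) 1, (s - u) * x + u ∈ Icc a s := by
    intro u hu x hx
    constructor <;> nlinarith [hu.1, hu.2, hx.1, hx.2]
  rw [← intervalIntegral.integral_const_mul]
  refine tendsto_integral_filter_of_dominated_convergence (fun x => M * |k x|) ?_ ?_
    (hk.abs.const_mul M) ?_
  · filter_upwards [hnear] with u hu
    have hcont : ContinuousOn (fun x => h ((s - u) * x + u)) (Icc 0 1) :=
      hh.comp (by fun_prop) (hmaps u hu)
    refine ((hcont.mono ?_).aestronglyMeasurable measurableSet_uIoc).mul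
      hk.def'.aestronglyMeasurable
    rw [uIoc_of_le zero_le_one]
    exact Ioc_subset_Icc_self
  · filter_upwards [hnear] with u hu
    refine Eventually.of_forall fun x hx => ?_
    rw [uIoc_of_le zero_le_one] at hx
    rw [norm_mul, Real.norm_eq_abs, Real.norm_eq_abs]
    exact mul_le_mul_of_nonneg_right (hM _ (hmaps u hu x (Ioc_subset_Icc_self hx))) (abs_nonneg _)
  · refine Eventually.of_forall fun x hx => ?_
    rw [uIoc_of_le zero_le_one] at hx
    have hlim : Tendsto (fun u => (s - u) * x + u) (𝓝[<] s) (𝓝[Icc a s] s) := by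
      refine tendsto_nhdsWithin_of_tendsto_nhds_of_eventually_within _ ?_ ?_
      · have : Tendsto (fun u => (s - u) * x + u) (𝓝 s) (𝓝 ((s - s) * x + s)) :=
          (by fun_prop : Continuous fun u => (s - u) * x + u).tendsto s
        simpa using this.mono_left nhdsWithin_le_nhds
      · filter_upwards [hnear] with u hu
        exact hmaps u hu x (Ioc_subset_Icc_self hx)
    exact ((hh s ⟨has.le, le_rfl⟩).tendsto.comp hlim).mul_const _

lemma tendsto_integral_mul_rpow_sub_mul_rpow_sub {h : ℝ → ℝ} {a s α : ℝ} (has : a < s)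
    (hh : ContinuousOn h (Icc a s)) (hα0 : 0 < α) (hα1 : α < 1) :
    Tendsto (fun u => ∫ r in u..s, h r * (s - r) ^ (α - 1) * (r - u) ^ (-α)) (𝓝[<] s)
      (𝓝 (Gamma (1 - α) * Gamma α * h s)) := by
  have hbeta := integral_rpow_mul_one_sub_rpow (sub_pos.2 hα1) hα0
  have hkernel : (fun x : ℝ => (1 - x) ^ (α - 1) * x ^ (-α)) =
      fun x => x ^ (1 - α - 1) * (1 - x) ^ (α - 1) := by
    ext x
    rw [sub_sub_cancel_left, mul_comm]
  rw [← hkernel, sub_add_cancel, Gamma_one, div_one] at hbeta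
  have hk := intervalIntegrable_rpow_mul_one_sub_rpow (sub_pos.2 hα1) hα0
  rw [← hkernel] at hk
  rw [← hbeta, mul_comm]
  refine (tendsto_integral_comp_affine_mul has hh hk).congr' ?_
  filter_upwards [self_mem_nhdsWithin] with u hu
  exact (integral_mul_rpow_sub_mul_rpow_sub h α hu).symm

theorem stmt16_general (α cH : ℝ) (hα0 : 0 < α) (hα1 : α < 1 / 2)
    (g : ℝ → ℝ) (hg : ContinuousOn g (Set.Icc (0:ℝ) 1))
    (s : ℝ) (hs : s ∈ Set.Ioc (0:ℝ) 1) :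
    Tendsto (fun u : ℝ =>
        (cH / Real.Gamma α) * s ^ (-α) *
          ∫ r in u..s, r ^ α * g r * (s - r) ^ (α - 1) * (r - u) ^ (-α))
      (nhdsWithin s (Set.Iio s))
      (nhds (cH * Real.Gamma (1 - α) * g s)) := by
  have hweight : ContinuousOn (fun r => r ^ α * g r) (Icc 0 s) :=
    ((continuousOn_id.rpow_const fun _ _ => Or.inr hα0.le).mul hg).mono
      (Icc_subset_Icc_right hs.2)
  have hlim := (tendsto_integral_mul_rpow_sub_mul_rpow_sub hs.1 hweight hα0
    (by linarith)).const_mul (cH / Gamma α * s ^ (-α))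
  convert hlim using 2
  have hsα : s ^ (-α) * s ^ α = 1 := by rw [← rpow_add hs.1, neg_add_cancel, rpow_zero]
  have hΓ : Gamma α ≠ 0 := (Gamma_pos_of_pos hα0).ne'
  calc cH * Gamma (1 - α) * g s
      = cH / Gamma α * Gamma α * (s ^ (-α) * s ^ α) * (Gamma (1 - α) * g s) := by
        rw [div_mul_cancel₀ _ hΓ, hsα]; ring
    _ = _ := by ring

/-- Diagonal limit of the kernel term `D₁`:
`D₁(s,u) → c_H Γ(1-α) g(s)` as `u → s⁻`. -/
theorem stmt16 (α cH : ℝ) (hα0 : 0 < α) (hα1 : α < 1 / 2) (hcH : 0 < cH)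
    (g : ℝ → ℝ) (hg : ContinuousOn g (Set.Icc (0:ℝ) 1))
    (s : ℝ) (hs : s ∈ Set.Ioc (0:ℝ) 1) :
    Tendsto (fun u : ℝ =>
        (cH / Real.Gamma α) * s ^ (-α) *
          ∫ r in u..s, r ^ α * g r * (s - r) ^ (α - 1) * (r - u) ^ (-α))
      (nhdsWithin s (Set.Iio s))
      (nhds (cH * Real.Gamma (1 - α) * g s)) :=
  stmt16_general α cH hα0 hα1 g hg s hs
end

section
/- Let k' > 0, K₂ > 0, H > β > 0. Suppose a family of probabilities satisfies P(|M| > ξ | A_ε) ≤ exp(-ξ²/(2k'ε⁴)) · exp(K₂ ε^{-1/(H-β)}) for all ξ > 0 and ε ∈ (0,1), and that M conditioned on A_ε has a distribution. If 1/(H-β) < 4, i.e. β < H - 1/4, then for every δ > 0, limsup_{ε→0} E(e^M | A_ε) ≤ e^δ, hence limsup_{ε→0} E(e^M | A_ε) ≤ 1. -/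
open MeasureTheory Real Filter

set_option maxHeartbeats 1000000

private lemma tendsto_aux (c₀ K₂ a : ℝ) (hc₀ : 0 < c₀) (hK₂ : 0 < K₂)
    (ha0 : 0 < a) (ha4 : a < 4) :
    Tendsto (fun ε : ℝ => Real.exp (K₂ * ε ^ (-a) - c₀ * (ε ^ 4)⁻¹))
      (nhdsWithin 0 (Set.Ioi 0)) (nhds 0) := by
  apply Real.tendsto_exp_atBot.comp
  have hinv : Tendsto (fun ε : ℝ => (ε ^ 4)⁻¹) (nhdsWithin 0 (Set.Ioi 0)) atTop := by
    apply tendsto_inv_nhdsGT_zero.comp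
    rw [tendsto_nhdsWithin_iff]
    constructor
    · exact ((continuous_pow 4).tendsto' 0 0 (by norm_num)).mono_left nhdsWithin_le_nhds
    · filter_upwards [self_mem_nhdsWithin] with ε (hε : (0:ℝ) < ε)
      exact pow_pos hε 4
  have hg : Tendsto (fun ε : ℝ => -(c₀ / 2 * (ε ^ 4)⁻¹)) (nhdsWithin 0 (Set.Ioi 0)) atBot := by
    rw [tendsto_neg_atBot_iff]
    exact hinv.const_mul_atTop (by positivity)
  refine tendsto_atBot_mono' _ ?_ hg
  have hpow : Tendsto (fun ε : ℝ => ε ^ (4 - a)) (nhdsWithin 0 (Set.Ioi 0)) (nhds 0) := by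
    have h := (Real.continuousAt_rpow_const 0 (4 - a) (Or.inr (by linarith))).tendsto
    rw [Real.zero_rpow (by linarith : 4 - a ≠ 0)] at h
    exact h.mono_left nhdsWithin_le_nhds
  filter_upwards [self_mem_nhdsWithin,
    hpow.eventually_le_const (show (0:ℝ) < c₀ / (2 * K₂) by positivity)] with ε hε hεp
  have hε0 : (0 : ℝ) < ε := hε
  have hsplit : ε ^ (-a) = ε ^ (4 - a) * (ε ^ 4)⁻¹ := by
    rw [show (-a) = (4 - a) + (-(4:ℝ)) by ring, Real.rpow_add hε0, Real.rpow_neg hε0.le,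
      show ((4:ℝ)) = ((4:ℕ):ℝ) by norm_num, Real.rpow_natCast]
  have hv : (0:ℝ) ≤ (ε ^ 4)⁻¹ := by positivity
  have hKε : K₂ * ε ^ (4 - a) ≤ c₀ / 2 := by
    calc K₂ * ε ^ (4 - a) ≤ K₂ * (c₀ / (2 * K₂)) := by
          exact mul_le_mul_of_nonneg_left hεp hK₂.le
      _ = c₀ / 2 := by field_simp
  have := mul_le_mul_of_nonneg_right hKε hv
  rw [hsplit]
  nlinarith [this]

/-- Gaussian-type conditional tail bounds imply `limsup E(e^M | A_ε) ≤ 1`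
when `β < H - 1/4`. Here `p ε` is the conditional law of `M` given `A_ε`. -/
theorem stmt17 (k' K₂ H β : ℝ) (hk' : 0 < k') (hK₂ : 0 < K₂)
    (hβ0 : 0 < β) (hβH : β < H) (hβ : β < H - 1 / 4)
    (p : ℝ → Measure ℝ) (hp : ∀ ε ∈ Set.Ioo (0:ℝ) 1, IsProbabilityMeasure (p ε))
    (htail : ∀ ε ∈ Set.Ioo (0:ℝ) 1, ∀ ξ : ℝ, 0 < ξ →
      ((p ε) {x : ℝ | ξ < |x|}).toReal
        ≤ Real.exp (-ξ ^ 2 / (2 * k' * ε ^ 4)) * Real.exp (K₂ * ε ^ (-1 / (H - β)))) :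
    (∀ δ : ℝ, 0 < δ →
      limsup (fun ε : ℝ => ∫ x : ℝ, Real.exp x ∂(p ε)) (nhdsWithin 0 (Set.Ioi 0))
        ≤ Real.exp δ) ∧
    limsup (fun ε : ℝ => ∫ x : ℝ, Real.exp x ∂(p ε)) (nhdsWithin 0 (Set.Ioi 0)) ≤ 1 := by
  have hab : (0:ℝ) < H - β := by linarith
  set a : ℝ := 1 / (H - β) with ha_def
  have ha0 : 0 < a := by positivity
  have ha4 : a < 4 := by
    rw [ha_def, div_lt_iff₀ hab]; nlinarith
  set F : ℝ → ℝ := fun ε => ∫ x : ℝ, Real.exp x ∂(p ε) with hF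
  have hFnn : ∀ ε, 0 ≤ F ε := fun ε => integral_nonneg fun x => (Real.exp_pos x).le
  have key : ∀ δ : ℝ, 0 < δ →
      limsup F (nhdsWithin 0 (Set.Ioi 0)) ≤ Real.exp δ := by
    intro δ hδ
    refine le_of_forall_pos_le_add fun η hη => ?_
    suffices hev : ∀ᶠ ε in nhdsWithin (0:ℝ) (Set.Ioi 0), F ε ≤ Real.exp δ + η by
      exact limsup_le_of_le (isCoboundedUnder_le_of_le _ fun ε => hFnn ε) hev
    set T : ℝ := Real.exp δ with hT
    have hT1 : (1:ℝ) < T := by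
      rw [hT]; calc (1:ℝ) = Real.exp 0 := Real.exp_zero.symm
        _ < Real.exp δ := Real.exp_lt_exp.mpr hδ
    have hT0 : (0:ℝ) < T := by linarith
    set c₀ : ℝ := δ ^ 2 / (4 * k') with hc₀def
    have hc₀ : 0 < c₀ := by positivity
    -- the tail integral constant
    have hint : IntegrableOn (fun t : ℝ => (t ^ 2)⁻¹) (Set.Ioi T) := by
      refine (integrableOn_Ioi_rpow_of_lt (by norm_num : (-2:ℝ) < -1) hT0).congr_fun
        (fun x hx => ?_) measurableSet_Ioi
      have hx0 : (0:ℝ) < x := lt_trans hT0 hx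
      dsimp only
      rw [show ((-2:ℝ)) = -((2:ℕ):ℝ) by norm_num, Real.rpow_neg hx0.le, Real.rpow_natCast]
    set B : ℝ := ∫ t in Set.Ioi T, (t ^ 2)⁻¹ with hBdef
    have hB0 : 0 ≤ B := setIntegral_nonneg measurableSet_Ioi fun t _ => by positivity
    have hJ : (∫⁻ t in Set.Ioi T, ENNReal.ofReal ((t ^ 2)⁻¹)) = ENNReal.ofReal B := by
      rw [hBdef, ofReal_integral_eq_lintegral_ofReal hint]
      exact ae_of_all _ fun t => by positivity
    have hBη : (0:ℝ) < η / (B + 1) := by positivity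
    have htend := tendsto_aux c₀ K₂ a hc₀ hK₂ ha0 ha4
    have h2tend : Tendsto (fun ε : ℝ => 8 * (k' * ε ^ 4)) (nhdsWithin 0 (Set.Ioi 0))
        (nhds 0) := by
      have : Continuous fun ε : ℝ => 8 * (k' * ε ^ 4) := by continuity
      exact ((this.tendsto' 0 0 (by norm_num)).mono_left nhdsWithin_le_nhds)
    filter_upwards [Ioo_mem_nhdsGT_of_mem (Set.left_mem_Ico.mpr one_pos),
      h2tend.eventually_le_const hδ, htend.eventually_le_const hBη] with ε hε1 hε2 hε3
    haveI := hp ε hε1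
    have hε0 : (0:ℝ) < ε := hε1.1
    have hε4 : (0:ℝ) < ε ^ 4 := pow_pos hε0 4
    have hs : (0:ℝ) < k' * ε ^ 4 := by positivity
    set C : ℝ := K₂ * ε ^ (-1 / (H - β)) with hCdef
    have hCa : C = K₂ * ε ^ (-a) := by rw [hCdef, ha_def, neg_div]
    set Eε : ℝ := C - c₀ * (ε ^ 4)⁻¹ with hEdef
    have hε3' : Real.exp Eε ≤ η / (B + 1) := by
      rw [hEdef, hCa]; exact hε3
    -- main chain
    have hmain : (∫⁻ x : ℝ, ENNReal.ofReal (Real.exp x) ∂(p ε)) ≤ ENNReal.ofReal (T + η) := by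
      rw [lintegral_eq_lintegral_meas_lt (p ε) (ae_of_all _ fun x => (Real.exp_pos x).le)
        Real.measurable_exp.aemeasurable]
      rw [← Set.Ioc_union_Ioi_eq_Ioi hT0.le,
        lintegral_union measurableSet_Ioi Set.Ioc_disjoint_Ioi_same]
      have hD1 : (∫⁻ t in Set.Ioc 0 T, (p ε) {x : ℝ | t < Real.exp x}) ≤ ENNReal.ofReal T := by
        calc (∫⁻ t in Set.Ioc 0 T, (p ε) {x : ℝ | t < Real.exp x})
            ≤ ∫⁻ _ in Set.Ioc 0 T, 1 := lintegral_mono fun t => prob_le_one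
          _ = volume (Set.Ioc (0:ℝ) T) := setLIntegral_one _
          _ = ENNReal.ofReal T := by rw [Real.volume_Ioc, sub_zero]
      have hD2 : (∫⁻ t in Set.Ioi T, (p ε) {x : ℝ | t < Real.exp x}) ≤ ENNReal.ofReal η := by
        have hstep : ∀ t ∈ Set.Ioi T, (p ε) {x : ℝ | t < Real.exp x}
            ≤ ENNReal.ofReal (Real.exp Eε * (t ^ 2)⁻¹) := by
          intro t ht
          have ht0 : (0:ℝ) < t := lt_trans hT0 ht
          set L : ℝ := Real.log t with hLdef
          have hLδ : δ < L := (Real.lt_log_iff_exp_lt ht0).mpr ht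
          have hL0 : 0 < L := lt_trans hδ hLδ
          have hsub : {x : ℝ | t < Real.exp x} ⊆ {x : ℝ | L < |x|} := by
            intro x hx
            have : L < x := by
              have := Real.log_lt_log ht0 hx
              rwa [Real.log_exp] at this
            exact lt_of_lt_of_le this (le_abs_self x)
          have h1 : (p ε) {x : ℝ | t < Real.exp x} ≤ (p ε) {x : ℝ | L < |x|} :=
            measure_mono hsub
          have h2 : ((p ε) {x : ℝ | L < |x|}).toReal
              ≤ Real.exp (-L ^ 2 / (2 * k' * ε ^ 4)) * Real.exp C :=
            htail ε hε1 L hL0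
          have h3 : (p ε) {x : ℝ | L < |x|}
              ≤ ENNReal.ofReal (Real.exp (-L ^ 2 / (2 * k' * ε ^ 4)) * Real.exp C) :=
            (ENNReal.le_ofReal_iff_toReal_le (measure_ne_top _ _) (by positivity)).mpr h2
          refine le_trans (le_trans h1 h3) (ENNReal.ofReal_le_ofReal ?_)
          -- real inequality
          have htL : (t ^ 2)⁻¹ = Real.exp (-(2 * L)) := by
            rw [Real.exp_neg]
            congr 1
            rw [show t = Real.exp L from (Real.exp_log ht0).symm, ← Real.exp_nat_mul]
            norm_num
          rw [htL, ← Real.exp_add, ← Real.exp_add]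
          apply Real.exp_le_exp.mpr
          have e1 : c₀ * (ε ^ 4)⁻¹ = δ ^ 2 / (4 * (k' * ε ^ 4)) := by
            rw [hc₀def]; field_simp
          have key2 : δ ^ 2 / (4 * (k' * ε ^ 4)) + 2 * L ≤ L ^ 2 / (2 * (k' * ε ^ 4)) := by
            have h1 : δ ^ 2 ≤ L ^ 2 := by nlinarith
            have h2 : 8 * (k' * ε ^ 4) * L ≤ L * L :=
              mul_le_mul_of_nonneg_right (by linarith) hL0.le
            have hbase : δ ^ 2 + 8 * (k' * ε ^ 4) * L ≤ 2 * L ^ 2 := by nlinarith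
            rw [div_add' _ _ _ (by positivity : (4 * (k' * ε ^ 4)) ≠ 0),
              div_le_div_iff₀ (by positivity) (by positivity)]
            nlinarith [mul_le_mul_of_nonneg_left hbase hs.le]
          rw [hEdef, e1]
          have : -L ^ 2 / (2 * k' * ε ^ 4) = -(L ^ 2 / (2 * (k' * ε ^ 4))) := by ring
          rw [this]
          linarith
        calc (∫⁻ t in Set.Ioi T, (p ε) {x : ℝ | t < Real.exp x})
            ≤ ∫⁻ t in Set.Ioi T, ENNReal.ofReal (Real.exp Eε * (t ^ 2)⁻¹) := by
              refine setLIntegral_mono ?_ hstep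
              exact (measurable_const.mul ((measurable_id.pow_const 2).inv)).ennreal_ofReal
          _ = ENNReal.ofReal (Real.exp Eε) * ∫⁻ t in Set.Ioi T, ENNReal.ofReal ((t ^ 2)⁻¹) := by
              rw [← lintegral_const_mul' _ _ ENNReal.ofReal_ne_top]
              refine lintegral_congr fun t => ?_
              rw [ENNReal.ofReal_mul (Real.exp_nonneg _)]
          _ ≤ ENNReal.ofReal (η / (B + 1)) * ENNReal.ofReal B := by
              rw [hJ]
              exact mul_le_mul_left (ENNReal.ofReal_le_ofReal hε3') _
          _ ≤ ENNReal.ofReal η := by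
              rw [← ENNReal.ofReal_mul hBη.le]
              apply ENNReal.ofReal_le_ofReal
              rw [div_mul_eq_mul_div, div_le_iff₀ (by linarith)]
              nlinarith
      calc (∫⁻ t in Set.Ioc 0 T, (p ε) {x : ℝ | t < Real.exp x})
            + ∫⁻ t in Set.Ioi T, (p ε) {x : ℝ | t < Real.exp x}
          ≤ ENNReal.ofReal T + ENNReal.ofReal η := add_le_add hD1 hD2
        _ = ENNReal.ofReal (T + η) := (ENNReal.ofReal_add hT0.le hη.le).symm
    have hFrep : F ε = (∫⁻ x : ℝ, ENNReal.ofReal (Real.exp x) ∂(p ε)).toReal :=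
      integral_eq_lintegral_of_nonneg_ae (ae_of_all _ fun x => (Real.exp_pos x).le)
        Real.measurable_exp.aestronglyMeasurable
    rw [hFrep]
    exact ENNReal.toReal_le_of_le_ofReal (by positivity) hmain
  refine ⟨key, ?_⟩
  refine le_of_forall_pos_le_add fun η hη => ?_
  calc limsup F (nhdsWithin 0 (Set.Ioi 0)) ≤ Real.exp (Real.log (1 + η)) :=
        key _ (Real.log_pos (by linarith))
    _ = 1 + η := Real.exp_log (by linarith)
end

section
/- Let 0 < α < 1/2 and let g: [0,1] → ℝ be continuous. For u < s define B(u,r) = ∫_0^1 v^{-α-1}(1 - (u/((r-u)v+u))^α) dv and D₂(s,u) = (c_H α/Γ(α)) s^{-α} ∫_u^s r^α g(r) (s-r)^{α-1} (r-u)^{-α} B(u,r) dr. Then B(s,s) = 0 (interpreting B(u,r) with u = r) and lim_{u→s⁻} D₂(s,u) = 0, in particular: (i) the improper integral defining B(u,r) converges for 0 < u ≤ r; (ii) B(u,r) → 0 as r → u⁺ with u fixed and bounded away from 0. -/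
/-!
Since `x ≤ x ^ α` on `[0, 1]`, the integrand of `B(u, r)` is at most `((r - u) / u) v ^ (-α)`,
so `0 ≤ B(u, r) ≤ (r - u) / (u (1 - α))`: this gives convergence and `B(u, r) → 0` as `r → u⁺`.
In `D₂` the factor `(r - u) ^ (-α) B(u, r)` is then `O((s - u) ^ (1 - α))` uniformly in `r`, and
`∫_u^s (s - r) ^ (α - 1) dr = (s - u) ^ α / α`, so `D₂(s, u) = O(s - u)`.
-/

open MeasureTheory Real intervalIntegral Filter

/-- `B(u,r) = ∫_0^1 v^{-α-1} (1 - (u/((r-u)v+u))^α) dv`. -/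
noncomputable def Bint (α u r : ℝ) : ℝ :=
  ∫ v in (0:ℝ)..1, v ^ (-α - 1) * (1 - (u / ((r - u) * v + u)) ^ α)

open Set Topology

section BoundOnB

variable {α u r v : ℝ}

lemma div_denom_mem_Ioc (hu : 0 < u) (hur : u ≤ r) (hv : 0 ≤ v) :
    u / ((r - u) * v + u) ∈ Ioc 0 1 := by
  have hd : 0 < (r - u) * v + u := by nlinarith
  exact ⟨by positivity, (div_le_one hd).2 (by nlinarith)⟩

lemma Bint_integrand_nonneg (hα : 0 ≤ α) (hu : 0 < u) (hur : u ≤ r) (hv : 0 ≤ v) :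
    0 ≤ v ^ (-α - 1) * (1 - (u / ((r - u) * v + u)) ^ α) := by
  obtain ⟨hx0, hx1⟩ := div_denom_mem_Ioc hu hur hv
  exact mul_nonneg (rpow_nonneg hv _) (sub_nonneg.2 (rpow_le_one hx0.le hx1 hα))

lemma Bint_integrand_le (hα : α ≤ 1) (hu : 0 < u) (hur : u ≤ r) (hv : 0 < v) :
    v ^ (-α - 1) * (1 - (u / ((r - u) * v + u)) ^ α) ≤ (r - u) / u * v ^ (-α) := by
  obtain ⟨hx0, hx1⟩ := div_denom_mem_Ioc hu hur hv.le
  have hd : 0 < (r - u) * v + u := by nlinarith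
  have h_one_sub : 1 - (u / ((r - u) * v + u)) ^ α ≤ (r - u) * v / u :=
    calc 1 - (u / ((r - u) * v + u)) ^ α
        ≤ 1 - u / ((r - u) * v + u) := by gcongr; exact self_le_rpow_of_le_one hx0.le hx1 hα
      _ = (r - u) * v / ((r - u) * v + u) := by field_simp; ring
      _ ≤ (r - u) * v / u := by
          gcongr
          linarith [mul_nonneg (sub_nonneg.2 hur) hv.le]
  calc v ^ (-α - 1) * (1 - (u / ((r - u) * v + u)) ^ α)
      ≤ v ^ (-α - 1) * ((r - u) * v / u) := by gcongr
    _ = (r - u) / u * v ^ (-α - 1 + 1) := by rw [rpow_add_one hv.ne']; ring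
    _ = (r - u) / u * v ^ (-α) := by ring_nf

lemma intervalIntegrable_Bint_integrand (hα0 : 0 ≤ α) (hα1 : α < 1) (hu : 0 < u) (hur : u ≤ r) :
    IntervalIntegrable
      (fun v => v ^ (-α - 1) * (1 - (u / ((r - u) * v + u)) ^ α)) volume 0 1 := by
  refine (((intervalIntegrable_rpow' (by linarith : -1 < -α)).const_mul
    ((r - u) / u))).mono_fun' (by fun_prop) ?_
  rw [uIoc_of_le zero_le_one]
  filter_upwards [ae_restrict_mem measurableSet_Ioc] with v hv
  rw [norm_of_nonneg (Bint_integrand_nonneg hα0 hu hur hv.1.le)]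
  exact Bint_integrand_le hα1.le hu hur hv.1

lemma Bint_nonneg (hα : 0 ≤ α) (hu : 0 < u) (hur : u ≤ r) : 0 ≤ Bint α u r :=
  integral_nonneg zero_le_one fun _ hv => Bint_integrand_nonneg hα hu hur hv.1

lemma Bint_le (hα0 : 0 ≤ α) (hα1 : α < 1) (hu : 0 < u) (hur : u ≤ r) :
    Bint α u r ≤ (r - u) / (u * (1 - α)) := by
  calc Bint α u r ≤ ∫ v in (0:ℝ)..1, (r - u) / u * v ^ (-α) :=
        integral_mono_on_of_le_Ioo zero_le_one (intervalIntegrable_Bint_integrand hα0 hα1 hu hur)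
          ((intervalIntegrable_rpow' (by linarith)).const_mul _)
          fun v hv => Bint_integrand_le hα1.le hu hur hv.1
    _ = (r - u) / (u * (1 - α)) := by
        rw [intervalIntegral.integral_const_mul, integral_rpow (Or.inl (by linarith)), one_rpow,
          zero_rpow (by linarith)]
        field_simp
        ring

lemma Bint_self (hu : u ≠ 0) : Bint α u u = 0 := by
  simp [Bint, div_self hu]

lemma tendsto_Bint_nhdsGT (hα0 : 0 ≤ α) (hα1 : α < 1) (hu : 0 < u) :
    Tendsto (fun r => Bint α u r) (𝓝[>] u) (𝓝 0) := by
  have hupper : Tendsto (fun r => (r - u) / (u * (1 - α))) (𝓝[>] u) (𝓝 0) := by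
    have hcont : Continuous fun r => (r - u) / (u * (1 - α)) := by fun_prop
    exact (hcont.tendsto' u 0 (by simp)).mono_left nhdsWithin_le_nhds
  refine tendsto_of_tendsto_of_tendsto_of_le_of_le' tendsto_const_nhds hupper ?_ ?_ <;>
    filter_upwards [self_mem_nhdsWithin] with r hr
  · exact Bint_nonneg hα0 hu (le_of_lt hr)
  · exact Bint_le hα0 hα1 hu (le_of_lt hr)

end BoundOnB

section DiagonalLimit

variable {α u r s : ℝ}

lemma intervalIntegrable_sub_rpow (hα : 0 < α) :
    IntervalIntegrable (fun r => (s - r) ^ (α - 1)) volume u s := by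
  simpa using ((intervalIntegrable_rpow' (by linarith : -1 < α - 1)).comp_sub_left s :
    IntervalIntegrable (fun r => (s - r) ^ (α - 1)) volume (s - (s - u)) (s - 0))

lemma integral_sub_rpow (hα : 0 < α) :
    ∫ r in u..s, (s - r) ^ (α - 1) = (s - u) ^ α / α := by
  rw [intervalIntegral.integral_comp_sub_left (fun x => x ^ (α - 1)) s, sub_self,
    integral_rpow (Or.inl (by linarith)), sub_add_cancel, zero_rpow hα.ne', sub_zero]

lemma rpow_neg_mul_Bint_le (hα0 : 0 ≤ α) (hα1 : α < 1) (hu : 0 < u) (hur : u < r) :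
    (r - u) ^ (-α) * Bint α u r ≤ (r - u) ^ (1 - α) / (u * (1 - α)) :=
  calc (r - u) ^ (-α) * Bint α u r ≤ (r - u) ^ (-α) * ((r - u) / (u * (1 - α))) := by
        gcongr; exact Bint_le hα0 hα1 hu hur.le
    _ = (r - u) ^ (-α + 1) / (u * (1 - α)) := by
        rw [rpow_add_one (sub_pos.2 hur).ne']; ring
    _ = (r - u) ^ (1 - α) / (u * (1 - α)) := by ring_nf

lemma norm_D2_integrand_le {g : ℝ → ℝ} {M : ℝ} (hα0 : 0 ≤ α) (hα1 : α < 1) (hu : 0 < u)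
    (hr : r ∈ Ioc u s) (hs : s ≤ 1) (hg : |g r| ≤ M) :
    ‖r ^ α * g r * (s - r) ^ (α - 1) * (r - u) ^ (-α) * Bint α u r‖ ≤
      M / (u * (1 - α)) * (s - u) ^ (1 - α) * (s - r) ^ (α - 1) := by
  obtain ⟨hur, hrs⟩ := hr
  have hr0 : 0 < r := hu.trans hur
  have hM : 0 ≤ M := (abs_nonneg _).trans hg
  have hB := Bint_nonneg hα0 hu hur.le
  rw [norm_mul, norm_mul, norm_mul, norm_mul, norm_of_nonneg (rpow_nonneg hr0.le _),
    norm_of_nonneg (rpow_nonneg (sub_nonneg.2 hrs) _),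
    norm_of_nonneg (rpow_nonneg (sub_pos.2 hur).le _), norm_of_nonneg hB, norm_eq_abs]
  calc r ^ α * |g r| * (s - r) ^ (α - 1) * (r - u) ^ (-α) * Bint α u r
      = r ^ α * |g r| * (s - r) ^ (α - 1) * ((r - u) ^ (-α) * Bint α u r) := by ring
    _ ≤ 1 * M * (s - r) ^ (α - 1) * ((r - u) ^ (1 - α) / (u * (1 - α))) := by
        gcongr
        · exact rpow_le_one hr0.le (hrs.trans hs) hα0
        · exact rpow_neg_mul_Bint_le hα0 hα1 hu hur
    _ ≤ 1 * M * (s - r) ^ (α - 1) * ((s - u) ^ (1 - α) / (u * (1 - α))) := by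
        have : 0 < u * (1 - α) := by nlinarith
        gcongr
    _ = M / (u * (1 - α)) * (s - u) ^ (1 - α) * (s - r) ^ (α - 1) := by ring

lemma norm_integral_D2_le {g : ℝ → ℝ} {M : ℝ} (hα0 : 0 < α) (hα1 : α < 1) (hu : 0 < u)
    (hus : u ≤ s) (hs : s ≤ 1) (hg : ∀ r ∈ Ioc u s, |g r| ≤ M) :
    ‖∫ r in u..s, r ^ α * g r * (s - r) ^ (α - 1) * (r - u) ^ (-α) * Bint α u r‖ ≤
      M / (u * (1 - α) * α) * (s - u) := by
  calc ‖∫ r in u..s, r ^ α * g r * (s - r) ^ (α - 1) * (r - u) ^ (-α) * Bint α u r‖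
      ≤ ∫ r in u..s, M / (u * (1 - α)) * (s - u) ^ (1 - α) * (s - r) ^ (α - 1) :=
        norm_integral_le_of_norm_le hus
          (ae_of_all _ fun r hr => norm_D2_integrand_le hα0.le hα1 hu hr hs (hg r hr))
          ((intervalIntegrable_sub_rpow hα0).const_mul _)
    _ = M / (u * (1 - α) * α) * ((s - u) ^ (1 - α) * (s - u) ^ α) := by
        rw [intervalIntegral.integral_const_mul, integral_sub_rpow hα0]
        field_simp
    _ = M / (u * (1 - α) * α) * (s - u) := by
        rw [← rpow_add' (sub_nonneg.2 hus) (by norm_num), sub_add_cancel, rpow_one]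

end DiagonalLimit

theorem stmt18_general (α cH : ℝ) (hα0 : 0 < α) (hα1 : α < 1 / 2)
    (g : ℝ → ℝ) (hg : ContinuousOn g (Set.Icc (0:ℝ) 1)) :
    (∀ u r : ℝ, 0 < u → u ≤ r →
      IntervalIntegrable
        (fun v => v ^ (-α - 1) * (1 - (u / ((r - u) * v + u)) ^ α)) volume 0 1) ∧
    (∀ u : ℝ, 0 < u → Tendsto (fun r => Bint α u r) (nhdsWithin u (Set.Ioi u)) (nhds 0)) ∧
    (∀ s : ℝ, 0 < s → Bint α s s = 0) ∧
    (∀ s : ℝ, s ∈ Set.Ioc (0:ℝ) 1 →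
      Tendsto (fun u : ℝ =>
          (cH * α / Real.Gamma α) * s ^ (-α) *
            ∫ r in u..s, r ^ α * g r * (s - r) ^ (α - 1) * (r - u) ^ (-α) * Bint α u r)
        (nhdsWithin s (Set.Iio s)) (nhds 0)) := by
  have hα1' : α < 1 := by linarith
  refine ⟨fun u r hu hur => intervalIntegrable_Bint_integrand hα0.le hα1' hu hur,
    fun u hu => tendsto_Bint_nhdsGT hα0.le hα1' hu, fun s hs => Bint_self hs.ne',
    fun s ⟨hs0, hs1⟩ => ?_⟩
  obtain ⟨M, hM⟩ := isCompact_Icc.exists_bound_of_continuousOn hg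
  set K := cH * α / Gamma α * s ^ (-α)
  have hbound : ∀ᶠ u in 𝓝[<] s,
      ‖K * ∫ r in u..s, r ^ α * g r * (s - r) ^ (α - 1) * (r - u) ^ (-α) * Bint α u r‖ ≤
        ‖K‖ * (M / (u * (1 - α) * α) * (s - u)) := by
    filter_upwards [Ioo_mem_nhdsLT hs0] with u ⟨hu0, hus⟩
    rw [norm_mul]
    gcongr
    exact norm_integral_D2_le hα0 hα1' hu0 hus.le hs1
      fun r hr => hM r ⟨(hu0.trans hr.1).le, hr.2.trans hs1⟩
  have hcont : ContinuousAt (fun u => ‖K‖ * (M / (u * (1 - α) * α) * (s - u))) s := by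
    have : s * (1 - α) * α ≠ 0 := by positivity
    fun_prop (disch := assumption)
  exact squeeze_zero_norm' hbound
    ((hcont.tendsto.mono_left nhdsWithin_le_nhds).trans (by simp))

/-- Properties of `B(u,r)` and the diagonal limit of `D₂`. -/
theorem stmt18 (α cH : ℝ) (hα0 : 0 < α) (hα1 : α < 1 / 2) (hcH : 0 < cH)
    (g : ℝ → ℝ) (hg : ContinuousOn g (Set.Icc (0:ℝ) 1)) :
    (∀ u r : ℝ, 0 < u → u ≤ r →
      IntervalIntegrable
        (fun v => v ^ (-α - 1) * (1 - (u / ((r - u) * v + u)) ^ α)) volume 0 1) ∧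
    (∀ u : ℝ, 0 < u → Tendsto (fun r => Bint α u r) (nhdsWithin u (Set.Ioi u)) (nhds 0)) ∧
    (∀ s : ℝ, 0 < s → Bint α s s = 0) ∧
    (∀ s : ℝ, s ∈ Set.Ioc (0:ℝ) 1 →
      Tendsto (fun u : ℝ =>
          (cH * α / Real.Gamma α) * s ^ (-α) *
            ∫ r in u..s, r ^ α * g r * (s - r) ^ (α - 1) * (r - u) ^ (-α) * Bint α u r)
        (nhdsWithin s (Set.Iio s)) (nhds 0)) :=
  stmt18_general α cH hα0 hα1 g hg
end
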